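/- Let U ⊆ ℝ^m be open, and let Π^{ij} : U → ℝ (1 ≤ i,j ≤ m) be differentiable functions with Π^{ij} = −Π^{ji}, and H_{ijk} : U → ℝ totally antisymmetric functions, satisfying the twisted Jacobi identity Σ_l (Π^{il} ∂_l Π^{jk} + Π^{jl} ∂_l Π^{ki} + Π^{kl} ∂_l Π^{ij}) = Σ_{l,n,r} Π^{il} Π^{jn} Π^{kr} H_{lnr} for all i,j,k. Define Christoffel symbols Γ^{ij}_k := ∂_k Π^{ij} − (1/2) Σ_{l,n} Π^{il} Π^{jn} H_{kln}. Then the twisted Poisson tensor Π is parallel for the contravariant connection with these symbols: for all n,i,j, Σ_l Π^{nl} ∂_l Π^{ij} − Σ_l Γ^{ni}_l Π^{lj} − Σ_l Γ^{nj}_l Π^{il} = 0 on U. -/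

import Mathlib

/-!
At a point, `∇^n Π^{ij}` splits into a derivative part and an `H` part. Antisymmetry of `Π`
(and hence of `∂_l Π`) turns the derivative part into the left side of the twisted Jacobi
identity at `(n, i, j)`, i.e. into `T^{nij} := H(Π♯dxⁿ, Π♯dxⁱ, Π♯dxʲ)`. Each of the two `H`
terms of the Christoffel symbols contributes `-T^{nij}/2`, by the antisymmetry of `Π` and the
total antisymmetry of `H`, so the sum vanishes.
-/

/-- The `l`-th partial derivative of a function `f : ℝ^m → ℝ`. -/
noncomputable def pd {m : ℕ} (l : Fin m) (f : (Fin m → ℝ) → ℝ) (x : Fin m → ℝ) : ℝ :=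
  fderiv ℝ f x (Pi.single l 1)

/-- The Christoffel symbols `Γ^{ij}_k := ∂_k Π^{ij} − (1/2) Σ_{l,n} Π^{il} Π^{jn} H_{kln}`
of the canonical local contravariant connection on a twisted Poisson manifold. -/
noncomputable def Gamma {m : ℕ} (P : Fin m → Fin m → (Fin m → ℝ) → ℝ)
    (H : Fin m → Fin m → Fin m → (Fin m → ℝ) → ℝ)
    (i j kk : Fin m) (x : Fin m → ℝ) : ℝ :=
  pd kk (P i j) x - (1 / 2) * ∑ l, ∑ n, P i l x * P j n x * H kk l n x

open Finset

section TripleContraction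

variable {ι : Type*} [Fintype ι] (p : ι → ι → ℝ) (h : ι → ι → ι → ℝ)

/-- `H(Π♯dxⁱ, Π♯dxʲ, Π♯dxᵏ)`, the right-hand side of the twisted Jacobi identity. -/
def tripleContraction (i j k : ι) : ℝ :=
  ∑ l, ∑ a, ∑ b, p i l * p j a * p k b * h l a b

theorem tripleContraction_eq_sum_mul (i j k : ι) :
    tripleContraction p h i j k = ∑ l, p i l * ∑ a, ∑ b, p j a * p k b * h l a b := by
  simp only [tripleContraction, mul_sum, mul_assoc]

variable {p h}

theorem tripleContraction_swap (hh : ∀ a b c, h a b c = -h b a c) (i j k : ι) :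
    tripleContraction p h j i k = -tripleContraction p h i j k := by
  simp only [tripleContraction, ← sum_neg_distrib]
  rw [sum_comm]
  refine sum_congr rfl fun l _ => sum_congr rfl fun a _ => sum_congr rfl fun b _ => ?_
  rw [hh]
  ring

theorem tripleContraction_rotate (hh : ∀ a b c, h a b c = h b c a) (i j k : ι) :
    tripleContraction p h j k i = tripleContraction p h i j k := by
  refine (sum_congr rfl fun l _ => sum_comm).trans (sum_comm.trans ?_)
  refine sum_congr rfl fun b _ => sum_congr rfl fun l _ => sum_congr rfl fun a _ => ?_
  rw [hh b l a]
  ring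

end TripleContraction

theorem pd_eq_neg_of_eqOn_neg {m : ℕ} {U : Set (Fin m → ℝ)} (hU : IsOpen U)
    {f g : (Fin m → ℝ) → ℝ} (hfg : ∀ y ∈ U, f y = -g y) {x : Fin m → ℝ} (hx : x ∈ U)
    (l : Fin m) : pd l f x = -pd l g x := by
  have hf : f =ᶠ[nhds x] fun y => -g y :=
    Filter.eventually_of_mem (hU.mem_nhds hx) hfg
  simp [pd, hf.fderiv_eq, fderiv_fun_neg]

section Pointwise

variable {m : ℕ} (P : Fin m → Fin m → (Fin m → ℝ) → ℝ)
  (H : Fin m → Fin m → Fin m → (Fin m → ℝ) → ℝ) (x : Fin m → ℝ)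

theorem sum_Gamma_mul (n i : Fin m) (c : Fin m → ℝ) :
    ∑ l, Gamma P H n i l x * c l =
      ∑ l, pd l (P n i) x * c l -
        1 / 2 * ∑ l, (∑ a, ∑ b, P n a x * P i b x * H l a b x) * c l := by
  simp only [Gamma, sub_mul, sum_sub_distrib, mul_assoc, ← mul_sum]

/-- The contravariant derivative `∇^n Π^{ij}` of `Π` at `x` for the symbols `Γ`. -/
noncomputable def contraDeriv (Γ : Fin m → Fin m → Fin m → (Fin m → ℝ) → ℝ)
    (n i j : Fin m) : ℝ :=
  (∑ l, P n l x * pd l (P i j) x) - (∑ l, Γ n i l x * P l j x) - (∑ l, Γ n j l x * P i l x)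

variable {P H x}

theorem contraDeriv_Gamma_eq_zero (hP : ∀ a b, P a b x = -P b a x)
    (hdP : ∀ l a b, pd l (P a b) x = -pd l (P b a) x)
    (hH₁ : ∀ a b c, H a b c x = -H b a c x) (hH₂ : ∀ a b c, H a b c x = -H a c b x)
    {n i j : Fin m}
    (hJac : ∑ l, (P n l x * pd l (P i j) x + P i l x * pd l (P j n) x +
        P j l x * pd l (P n i) x) =
      tripleContraction (fun a b => P a b x) (fun a b c => H a b c x) n i j) :
    contraDeriv P x (Gamma P H) n i j = 0 := by
  set p : Fin m → Fin m → ℝ := fun a b => P a b x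
  set h : Fin m → Fin m → Fin m → ℝ := fun a b c => H a b c x
  have hcyc : ∀ a b c, h a b c = h b c a := fun a b c => by
    simp only [h]
    rw [hH₁, hH₂]
    ring
  have hD₁ : ∑ l, pd l (P n i) x * P l j x = -∑ l, P j l x * pd l (P n i) x := by
    simp only [← sum_neg_distrib, hP _ j]
    exact sum_congr rfl fun l _ => by ring
  have hD₂ : ∑ l, pd l (P n j) x * P i l x = -∑ l, P i l x * pd l (P j n) x := by
    simp only [← sum_neg_distrib, hdP _ n j]
    exact sum_congr rfl fun l _ => by ring
  have hT₁ : ∑ l, (∑ a, ∑ b, p n a * p i b * h l a b) * p l j =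
      -tripleContraction p h n i j := by
    rw [tripleContraction_rotate hcyc j n i, tripleContraction_eq_sum_mul, ← sum_neg_distrib]
    exact sum_congr rfl fun l _ => by rw [show p l j = -p j l from hP l j]; ring
  have hT₂ : ∑ l, (∑ a, ∑ b, p n a * p j b * h l a b) * p i l =
      -tripleContraction p h n i j := by
    rw [← tripleContraction_swap hH₁, tripleContraction_eq_sum_mul]
    exact sum_congr rfl fun l _ => mul_comm _ _
  simp only [sum_add_distrib] at hJac
  rw [contraDeriv, sum_Gamma_mul, sum_Gamma_mul, hD₁, hD₂, hT₁, hT₂]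
  linarith

end Pointwise

theorem stmt_17_general {m : ℕ} (U : Set (Fin m → ℝ)) (hU : IsOpen U)
    (P : Fin m → Fin m → (Fin m → ℝ) → ℝ)
    (H : Fin m → Fin m → Fin m → (Fin m → ℝ) → ℝ)
    (hPanti : ∀ i j, ∀ x ∈ U, P i j x = - P j i x)
    (hHanti1 : ∀ i j kk, ∀ x ∈ U, H i j kk x = - H j i kk x)
    (hHanti2 : ∀ i j kk, ∀ x ∈ U, H i j kk x = - H i kk j x)
    (hJac : ∀ i j kk, ∀ x ∈ U,
      (∑ l, (P i l x * pd l (P j kk) x + P j l x * pd l (P kk i) x +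
        P kk l x * pd l (P i j) x)) =
      ∑ l, ∑ n, ∑ r, P i l x * P j n x * P kk r x * H l n r x) :
    ∀ n i j, ∀ x ∈ U,
      (∑ l, P n l x * pd l (P i j) x) - (∑ l, Gamma P H n i l x * P l j x) -
        (∑ l, Gamma P H n j l x * P i l x) = 0 := by
  intro n i j x hx
  exact contraDeriv_Gamma_eq_zero (hPanti · · x hx)
    (fun l a b => pd_eq_neg_of_eqOn_neg hU (hPanti a b) hx l)
    (hHanti1 · · · x hx) (hHanti2 · · · x hx) (hJac n i j x hx)

/-- Let `U ⊆ ℝ^m` be open, `Π^{ij}` differentiable antisymmetric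
functions and `H_{ijk}` totally antisymmetric functions on `U` satisfying the twisted
Jacobi identity. Then the twisted Poisson tensor `Π` is parallel for the contravariant
connection with symbols `Γ^{ij}_k = ∂_k Π^{ij} − (1/2) Σ Π^{il} Π^{jn} H_{kln}`:
`∇^n Π^{ij} = Σ_l Π^{nl} ∂_l Π^{ij} − Σ_l Γ^{ni}_l Π^{lj} − Σ_l Γ^{nj}_l Π^{il} = 0`
on `U`. -/
theorem stmt_17 {m : ℕ} (U : Set (Fin m → ℝ)) (hU : IsOpen U)
    (P : Fin m → Fin m → (Fin m → ℝ) → ℝ)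
    (H : Fin m → Fin m → Fin m → (Fin m → ℝ) → ℝ)
    (hdiff : ∀ i j, ∀ x ∈ U, DifferentiableAt ℝ (P i j) x)
    (hPanti : ∀ i j, ∀ x ∈ U, P i j x = - P j i x)
    (hHanti1 : ∀ i j kk, ∀ x ∈ U, H i j kk x = - H j i kk x)
    (hHanti2 : ∀ i j kk, ∀ x ∈ U, H i j kk x = - H i kk j x)
    (hJac : ∀ i j kk, ∀ x ∈ U,
      (∑ l, (P i l x * pd l (P j kk) x + P j l x * pd l (P kk i) x +
        P kk l x * pd l (P i j) x)) =
      ∑ l, ∑ n, ∑ r, P i l x * P j n x * P kk r x * H l n r x) :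
    ∀ n i j, ∀ x ∈ U,
      (∑ l, P n l x * pd l (P i j) x) - (∑ l, Gamma P H n i l x * P l j x) -
        (∑ l, Gamma P H n j l x * P i l x) = 0 :=
  stmt_17_general U hU P H hPanti hHanti1 hHanti2 hJac
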